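/- arXiv:0802.4313 — 2 statements merged into one kernel-verified Lean document; each statement's English description precedes it below -/
import Mathlib

section
/- Let d and d̃ be the Riemannian distance functions of conformal metrics g and g̃ = h²g on a surface, with h continuous and positive. Then for each point s₀, lim_{s→s₀} [log d̃(s,s₀) - log d(s,s₀)] = log h(s₀); equivalently d̃(s,s₀)/d(s,s₀) → h(s₀) as s → s₀. -/
/-! Comparing with the straight segment from `s` to `s₀` bounds `d̃(s, s₀)` above by
`d(s, s₀)` times the maximum of `h` on that segment. Conversely, a path from `s` to `s₀`
must cover Euclidean length at least `d(s, s₀)` before it first leaves the ball of that radius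
about `s`, which lies within `2 d(s, s₀)` of `s₀`; so `d̃(s, s₀)` is at least `d(s, s₀)` times
the minimum of `h` there. By continuity both factors tend to `h(s₀)`. -/

open Filter

/-- The length of a path `γ` in the conformal metric `g̃ = h² g` (with `g` euclidean on
`ℝ²`): `∫₀¹ h(γ(t)) ‖γ'(t)‖ dt`. -/
noncomputable def confLength (h : ℝ × ℝ → ℝ) (γ : ℝ → ℝ × ℝ) : ℝ :=
  ∫ t in (0 : ℝ)..1, h (γ t) * ‖deriv γ t‖

/-- The Riemannian (geodesic) distance `d̃` of the conformal metric `g̃ = h² g`: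
the infimum of lengths of `C¹` paths joining the two points. -/
noncomputable def confDist (h : ℝ × ℝ → ℝ) (a b : ℝ × ℝ) : ℝ :=
  sInf {L : ℝ | ∃ γ : ℝ → ℝ × ℝ, ContDiff ℝ 1 γ ∧ γ 0 = a ∧ γ 1 = b ∧ L = confLength h γ}

open Topology Metric Set intervalIntegral

theorem ContinuousOn.exists_first_ge {f : ℝ → ℝ} {a b c : ℝ} (hf : ContinuousOn f (Icc a b))
    (hab : a ≤ b) (hc : c ≤ f b) : ∃ T ∈ Icc a b, c ≤ f T ∧ ∀ t ∈ Ico a T, f t < c := by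
  have hK : IsCompact (Icc a b ∩ f ⁻¹' Ici c) :=
    isCompact_Icc.of_isClosed_subset (hf.preimage_isClosed_of_isClosed isClosed_Icc isClosed_Ici)
      inter_subset_left
  obtain ⟨T, ⟨hT, hcT⟩, hleast⟩ := hK.exists_isLeast ⟨b, ⟨hab, le_rfl⟩, hc⟩
  refine ⟨T, hT, hcT, fun t ht => lt_of_not_ge fun hct => ?_⟩
  exact (hleast ⟨⟨ht.1, ht.2.le.trans hT.2⟩, hct⟩).not_gt ht.2

section PathLength

variable {E : Type*} [NormedAddCommGroup E] [NormedSpace ℝ E] [CompleteSpace E]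
  {γ : ℝ → E} {a b : ℝ}

theorem norm_sub_le_integral_norm_deriv (hγ : ContDiff ℝ 1 γ) (hab : a ≤ b) :
    ‖γ b - γ a‖ ≤ ∫ t in a..b, ‖deriv γ t‖ := by
  rw [← integral_deriv_eq_sub (fun t _ => (hγ.differentiable one_ne_zero).differentiableAt)
    ((hγ.continuous_deriv le_rfl).intervalIntegrable a b)]
  exact norm_integral_le_integral_norm hab

theorem mul_norm_sub_le_integral_mul_norm_deriv {w : ℝ → ℝ} {m : ℝ} (hw : Continuous w)
    (hγ : ContDiff ℝ 1 γ) (hab : a ≤ b) (hm : 0 ≤ m) (hmw : ∀ t ∈ Ioo a b, m ≤ w t) :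
    m * ‖γ b - γ a‖ ≤ ∫ t in a..b, w t * ‖deriv γ t‖ := by
  have hγ' : Continuous fun t => ‖deriv γ t‖ := (hγ.continuous_deriv le_rfl).norm
  calc m * ‖γ b - γ a‖ ≤ m * ∫ t in a..b, ‖deriv γ t‖ :=
        mul_le_mul_of_nonneg_left (norm_sub_le_integral_norm_deriv hγ hab) hm
    _ = ∫ t in a..b, m * ‖deriv γ t‖ := (integral_const_mul _ _).symm
    _ ≤ ∫ t in a..b, w t * ‖deriv γ t‖ :=
        integral_mono_on_of_le_Ioo hab ((continuous_const.mul hγ').intervalIntegrable _ _)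
          ((hw.mul hγ').intervalIntegrable _ _)
          fun t ht => mul_le_mul_of_nonneg_right (hmw t ht) (norm_nonneg _)

end PathLength

section ConformalDistance

variable {h : ℝ × ℝ → ℝ}

theorem confLength_nonneg (hh : ∀ p, 0 ≤ h p) (γ : ℝ → ℝ × ℝ) : 0 ≤ confLength h γ :=
  integral_nonneg zero_le_one fun _ _ => mul_nonneg (hh _) (norm_nonneg _)

theorem confDist_le_confLength (hh : ∀ p, 0 ≤ h p) {γ : ℝ → ℝ × ℝ} (hγ : ContDiff ℝ 1 γ) :
    confDist h (γ 0) (γ 1) ≤ confLength h γ := by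
  refine csInf_le ⟨0, ?_⟩ ⟨γ, hγ, rfl, rfl, rfl⟩
  rintro L ⟨γ', -, -, -, rfl⟩
  exact confLength_nonneg hh γ'

theorem le_confDist {a b : ℝ × ℝ} {c : ℝ}
    (hc : ∀ γ : ℝ → ℝ × ℝ, ContDiff ℝ 1 γ → γ 0 = a → γ 1 = b → c ≤ confLength h γ) :
    c ≤ confDist h a b := by
  refine le_csInf ⟨_, AffineMap.lineMap a b, AffineMap.contDiff_lineMap a b, by simp, by simp,
    rfl⟩ ?_
  rintro L ⟨γ, hγ, rfl, rfl, rfl⟩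
  exact hc γ hγ rfl rfl

theorem confDist_le_mul_dist (hcont : Continuous h) (hh : ∀ p, 0 ≤ h p) {a b : ℝ × ℝ} {M : ℝ}
    (hM : ∀ p ∈ segment ℝ a b, h p ≤ M) : confDist h a b ≤ M * dist a b := by
  set γ : ℝ → ℝ × ℝ := ⇑(AffineMap.lineMap (k := ℝ) a b)
  have hγ' : ∀ t, deriv γ t = b - a := fun t => AffineMap.hasDerivAt_lineMap.deriv
  calc confDist h a b = confDist h (γ 0) (γ 1) := by simp [γ]
    _ ≤ confLength h γ := confDist_le_confLength hh (AffineMap.contDiff_lineMap a b)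
    _ ≤ ∫ t in (0 : ℝ)..1, M * ‖b - a‖ := by
        refine integral_mono_on zero_le_one ?_ (continuous_const.intervalIntegrable _ _)
          fun t ht => ?_
        · simp only [hγ']
          exact ((hcont.comp AffineMap.lineMap_continuous).mul
            continuous_const).intervalIntegrable _ _
        · rw [hγ']
          refine mul_le_mul_of_nonneg_right (hM _ ?_) (norm_nonneg _)
          rw [segment_eq_image_lineMap]
          exact mem_image_of_mem _ ht
    _ = M * dist a b := by simp [dist_eq_norm']

theorem mul_dist_le_confLength (hcont : Continuous h) (hh : ∀ p, 0 ≤ h p) {m : ℝ} (hm : 0 ≤ m)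
    {γ : ℝ → ℝ × ℝ} (hγ : ContDiff ℝ 1 γ) (hmh : ∀ p ∈ ball (γ 0) (dist (γ 0) (γ 1)), m ≤ h p) :
    m * dist (γ 0) (γ 1) ≤ confLength h γ := by
  obtain ⟨T, hT, hdT, hball⟩ := (hγ.continuous.dist continuous_const).continuousOn.exists_first_ge
    zero_le_one (dist_comm (γ 0) (γ 1)).le
  -- `T` is the first time `γ` is `dist (γ 0) (γ 1)` away from its start; before `T` it stays in
  -- the ball where `m ≤ h`.
  calc m * dist (γ 0) (γ 1) ≤ m * ‖γ T - γ 0‖ := by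
        rw [← dist_eq_norm]; exact mul_le_mul_of_nonneg_left hdT hm
    _ ≤ ∫ t in (0 : ℝ)..T, h (γ t) * ‖deriv γ t‖ :=
        mul_norm_sub_le_integral_mul_norm_deriv (hcont.comp hγ.continuous) hγ hT.1 hm
          fun t ht => hmh _ (hball t (Ioo_subset_Ico_self ht))
    _ ≤ confLength h γ :=
        integral_mono_interval le_rfl hT.1 hT.2
          (MeasureTheory.ae_of_all _ fun _ => mul_nonneg (hh _) (norm_nonneg _))
          (((hcont.comp hγ.continuous).mul
            (hγ.continuous_deriv le_rfl).norm).intervalIntegrable _ _)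

theorem mul_dist_le_confDist (hcont : Continuous h) (hh : ∀ p, 0 ≤ h p) {m : ℝ} (hm : 0 ≤ m)
    {a b : ℝ × ℝ} (hmh : ∀ p ∈ ball a (dist a b), m ≤ h p) : m * dist a b ≤ confDist h a b :=
  le_confDist fun γ hγ h0 h1 => by
    subst h0 h1
    exact mul_dist_le_confLength hcont hh hm hγ hmh

theorem eventually_confDist_le_mul_dist (hcont : Continuous h) (hh : ∀ p, 0 ≤ h p)
    {s₀ : ℝ × ℝ} {M : ℝ} (hM : h s₀ < M) : ∀ᶠ s in 𝓝 s₀, confDist h s s₀ ≤ M * dist s s₀ := by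
  obtain ⟨δ, hδ, hlt⟩ := eventually_nhds_iff_ball.1 (hcont.continuousAt.eventually_lt
    continuousAt_const hM)
  filter_upwards [ball_mem_nhds s₀ hδ] with s hs
  exact confDist_le_mul_dist hcont hh fun p hp =>
    (hlt p ((convex_ball s₀ δ).segment_subset hs (mem_ball_self hδ) hp)).le

theorem eventually_mul_dist_le_confDist (hcont : Continuous h) (hh : ∀ p, 0 ≤ h p)
    {s₀ : ℝ × ℝ} {m : ℝ} (hm : 0 ≤ m) (hmh : m < h s₀) :
    ∀ᶠ s in 𝓝 s₀, m * dist s s₀ ≤ confDist h s s₀ := by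
  obtain ⟨δ, hδ, hlt⟩ := eventually_nhds_iff_ball.1 (continuousAt_const.eventually_lt
    hcont.continuousAt hmh)
  filter_upwards [ball_mem_nhds s₀ (half_pos hδ)] with s hs
  -- every point within `dist s s₀` of `s` lies within `2 * dist s s₀ < δ` of `s₀`
  refine mul_dist_le_confDist hcont hh hm fun p hp => (hlt p ?_).le
  refine ball_subset_ball' ?_ hp
  rw [mem_ball] at hs
  linarith

theorem tendsto_confDist_div_dist (hcont : Continuous h) (hpos : ∀ p, 0 < h p) (s₀ : ℝ × ℝ) :
    Tendsto (fun s => confDist h s s₀ / dist s s₀) (𝓝[≠] s₀) (𝓝 (h s₀)) := by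
  have hh : ∀ p, 0 ≤ h p := fun p => (hpos p).le
  have hdist : ∀ᶠ s in 𝓝[≠] s₀, 0 < dist s s₀ :=
    eventually_nhdsWithin_of_forall fun s hs => dist_pos.2 hs
  refine tendsto_order.2 ⟨fun a ha => ?_, fun b hb => ?_⟩
  · obtain ⟨m, ham, hm⟩ := exists_between ha
    filter_upwards [hdist, nhdsWithin_le_nhds (eventually_mul_dist_le_confDist hcont hh
      (le_max_right m 0) (max_lt hm (hpos s₀)))] with s hs hle
    exact (ham.trans_le (le_max_left m 0)).trans_le ((le_div_iff₀ hs).2 hle)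
  · obtain ⟨M, hM, hMb⟩ := exists_between hb
    filter_upwards [hdist, nhdsWithin_le_nhds (eventually_confDist_le_mul_dist hcont hh hM)]
      with s hs hle
    exact ((div_le_iff₀ hs).2 hle).trans_lt hMb

end ConformalDistance

/-- Let `d` and `d̃` be the distance functions of the conformal metrics `g` (euclidean)
and `g̃ = h² g`, with `h` continuous and positive.  Then
`d̃(s,s₀)/d(s,s₀) → h(s₀)` as `s → s₀`; equivalently
`log d̃(s,s₀) - log d(s,s₀) → log h(s₀)`. -/
theorem conformal_distance_ratio (h : ℝ × ℝ → ℝ) (hcont : Continuous h)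
    (hpos : ∀ p, 0 < h p) (s₀ : ℝ × ℝ) :
    Tendsto (fun s => confDist h s s₀ / dist s s₀) (nhdsWithin s₀ {s₀}ᶜ) (nhds (h s₀)) ∧
    Tendsto (fun s => Real.log (confDist h s s₀) - Real.log (dist s s₀))
      (nhdsWithin s₀ {s₀}ᶜ) (nhds (Real.log (h s₀))) := by
  have hratio := tendsto_confDist_div_dist hcont hpos s₀
  refine ⟨hratio, ((Real.continuousAt_log (hpos s₀).ne').tendsto.comp hratio).congr' ?_⟩
  filter_upwards [hratio.eventually_ne (hpos s₀).ne', self_mem_nhdsWithin] with s hne hs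
  exact Real.log_div (div_ne_zero_iff.1 hne).1 (dist_ne_zero.2 hs)
end

section
/- Suppose G and G̃ are two symmetric Green functions on a closed surface S (for metrics g and g̃ = h²g respectively) satisfying: Δ_g G(·,s₀) = -1/A on S∖{s₀} and Δ_g G̃(·,s₀) = -h²/Ã on S∖{s₀} (distributionally, with unit point source at s₀), ∫_S G(s,s₀) Ω(s) = 0, ∫_S G̃(s,s₀) h²Ω(s) = 0, where A = ∫_S Ω and Ã = ∫_S h²Ω. Then G̃(s,s₀) - G(s,s₀) = -(1/Ã)(u(s) + u(s₀)) + (1/Ã²)∫_S h² u Ω, where u := Δ_g⁻¹(h² - Ã/A·1) is the g-potential of the relative area density (normalized so ∫_S u Ω = 0). -/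
/-!
Put `K := G̃ - G` and weight `w := h²` with total mass `Ã = ∫ w`. By hypothesis
`K(·,a) - K(·,b)` is a constant `c` off `{a, b}`; integrating against `w` (the zero-`w`-mean
normalization of `G̃` kills its part and `G` contributes `u`) pins down `c = (u b - u a) / Ã`.
Integrating `K(s,s₀) = K(s,r) + (u r - u s₀) / Ã` once more against `w(r) dμ(r)` and using
symmetry of `K` gives the formula.
-/

open MeasureTheory

namespace ConformalGreen

variable {S : Type*} [MeasurableSpace S] {μ : Measure S} [NullSingletonClass μ]
  {K : S → S → ℝ} {w v : S → ℝ}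

theorem kernel_sub_kernel_eq_div
    (hKint : ∀ a, Integrable (fun x => K x a * w x) μ)
    (hKavg : ∀ a, ∫ x, K x a * w x ∂μ = -v a)
    (hW : ∫ x, w x ∂μ ≠ 0)
    (hconst : ∀ a b, a ≠ b → ∃ c : ℝ, ∀ x, x ≠ a → x ≠ b → K x a - K x b = c)
    {a b : S} (hab : a ≠ b) {x : S} (hxa : x ≠ a) (hxb : x ≠ b) :
    K x a - K x b = (v b - v a) / ∫ x, w x ∂μ := by
  obtain ⟨c, hc⟩ := hconst a b hab
  have hc_mul : c * ∫ x, w x ∂μ = v b - v a := calc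
    c * ∫ x, w x ∂μ = ∫ x, (K x a - K x b) * w x ∂μ := by
      rw [← integral_const_mul]
      refine integral_congr_ae ?_
      filter_upwards [μ.ae_ne a, μ.ae_ne b] with y hya hyb
      rw [hc y hya hyb]
    _ = ∫ x, K x a * w x ∂μ - ∫ x, K x b * w x ∂μ := by
      simp only [sub_mul]
      exact integral_sub (hKint a) (hKint b)
    _ = v b - v a := by rw [hKavg, hKavg]; ring
  rw [hc x hxa hxb, eq_div_iff hW, hc_mul]

theorem kernel_eq_of_forall_sub_eq_const
    (hKsymm : ∀ a b, K a b = K b a)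
    (hKint : ∀ a, Integrable (fun x => K x a * w x) μ)
    (hKavg : ∀ a, ∫ x, K x a * w x ∂μ = -v a)
    (hW : ∫ x, w x ∂μ ≠ 0) (hwv : Integrable (fun x => w x * v x) μ)
    (hconst : ∀ a b, a ≠ b → ∃ c : ℝ, ∀ x, x ≠ a → x ≠ b → K x a - K x b = c)
    {s s₀ : S} (hss₀ : s ≠ s₀) :
    K s s₀ = -(1 / ∫ x, w x ∂μ) * (v s + v s₀)
      + (1 / (∫ x, w x ∂μ) ^ 2) * ∫ x, w x * v x ∂μ := by
  set W := ∫ x, w x ∂μ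
  set I := ∫ x, w x * v x ∂μ
  have hw : Integrable w μ := .of_integral_ne_zero hW
  have hrest : Integrable (fun r => (1 / W) * (w r * v r) - v s₀ / W * w r) μ :=
    (hwv.const_mul _).sub (hw.const_mul _)
  have hmul : K s s₀ * W = -v s + (1 / W) * I - v s₀ / W * W := calc
    K s s₀ * W = ∫ r, K s s₀ * w r ∂μ := (integral_const_mul _ _).symm
    _ = ∫ r, (K r s * w r + ((1 / W) * (w r * v r) - v s₀ / W * w r)) ∂μ := by
      refine integral_congr_ae ?_
      filter_upwards [μ.ae_ne s, μ.ae_ne s₀] with r hrs hrs₀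
      have hshift := kernel_sub_kernel_eq_div hKint hKavg hW hconst
        hrs₀.symm hss₀ hrs.symm
      rw [hKsymm r s, eq_add_of_sub_eq' hshift]
      ring
    _ = -v s + (1 / W) * I - v s₀ / W * W := by
      rw [integral_add (hKint s) hrest, integral_sub (hwv.const_mul _) (hw.const_mul _),
        integral_const_mul, integral_const_mul, hKavg]
      ring
  rw [eq_div_of_mul_eq hW hmul]
  field_simp
  ring

end ConformalGreen

/-- `Gt` is `G̃`. `hconst` says that `G̃(·,s₀) - G(·,s₀)` and `G̃(·,s₁) - G(·,s₁)` differ by a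
constant off the sources (both are harmonic there up to the same counter-vorticity), and
`u = Δ_g⁻¹(h² - Ã/A)` is realized as `u(s) = ∫ G(s,r) h(r)² dμ(r)`. -/
theorem okikiolu_conformal_green_general {S : Type*} [MeasurableSpace S] (μ : Measure S)
    (hatom : ∀ s : S, μ {s} = 0)
    (h : S → ℝ)
    (G Gt : S → S → ℝ)
    (hGsym : ∀ a b, G a b = G b a) (hGtsym : ∀ a b, Gt a b = Gt b a)
    (hGh2int : ∀ b, Integrable (fun s => G s b * (h s) ^ 2) μ)
    (hGth2int : ∀ b, Integrable (fun s => Gt s b * (h s) ^ 2) μ)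
    (hGtavg : ∀ b, ∫ s, Gt s b * (h s) ^ 2 ∂μ = 0)
    (hconst : ∀ s₀ s₁, s₀ ≠ s₁ → ∃ c : ℝ, ∀ s, s ≠ s₀ → s ≠ s₁ →
      (Gt s s₀ - Gt s s₁) - (G s s₀ - G s s₁) = c)
    (u : S → ℝ) (hu : ∀ s, u s = ∫ r, G s r * (h r) ^ 2 ∂μ)
    (huint : Integrable (fun r => (h r) ^ 2 * u r) μ)
    (At : ℝ) (hAt : At = ∫ s, (h s) ^ 2 ∂μ) (hAtpos : 0 < At) :
    ∀ s s₀, s ≠ s₀ →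
      Gt s s₀ - G s s₀ =
        -(1 / At) * (u s + u s₀) + (1 / At ^ 2) * ∫ r, (h r) ^ 2 * u r ∂μ := by
  intro s s₀ hss₀
  have : NullSingletonClass μ := ⟨hatom⟩
  have hKsymm (a b : S) : Gt a b - G a b = Gt b a - G b a := by rw [hGsym, hGtsym]
  have hKint (a : S) : Integrable (fun x => (Gt x a - G x a) * h x ^ 2) μ := by
    simp only [sub_mul]
    exact (hGth2int a).sub (hGh2int a)
  have hKavg (a : S) : ∫ x, (Gt x a - G x a) * h x ^ 2 ∂μ = -u a := by
    simp only [sub_mul]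
    rw [integral_sub (hGth2int a) (hGh2int a), hGtavg, hu]
    simp only [hGsym a, zero_sub]
  subst hAt
  exact ConformalGreen.kernel_eq_of_forall_sub_eq_const hKsymm hKint hKavg hAtpos.ne' huint
    (fun a b hab => by simpa only [sub_sub_sub_comm] using hconst a b hab) hss₀

/-- Okikiolu's conformal transformation formula for Green functions on a closed surface.
`μ` is the area measure of `g` (total area `A = μ S`), and `h²μ` that of `g̃ = h²g`
(total area `Ã`).  `G`, `G̃` are the Green functions of `Δ_g`, `Δ_g̃`: symmetric, with
zero mean against the respective area forms, and such that for fixed sources `s₀, s₁`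
the difference `(G̃(·,s₀) - G̃(·,s₁)) - (G(·,s₀) - G(·,s₁))` is constant off the sources
(both sides being harmonic with the same logarithmic singularities).  With
`u = Δ_g⁻¹(h² - Ã/A·1)` realized via `u(s) = ∫ G(s,r) h(r)² dμ(r)`, one has
`G̃(s,s₀) - G(s,s₀) = -(1/Ã)(u(s) + u(s₀)) + (1/Ã²)∫ h² u dμ`. -/
theorem okikiolu_conformal_green {S : Type*} [MeasurableSpace S] (μ : Measure S)
    [IsFiniteMeasure μ] (hatom : ∀ s : S, μ {s} = 0)
    (h : S → ℝ) (hmeas : Measurable h) (hpos : ∀ s, 0 < h s)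
    (G Gt : S → S → ℝ)
    (hGsym : ∀ a b, G a b = G b a) (hGtsym : ∀ a b, Gt a b = Gt b a)
    (hGint : ∀ b, Integrable (fun s => G s b) μ)
    (hGh2int : ∀ b, Integrable (fun s => G s b * (h s) ^ 2) μ)
    (hGth2int : ∀ b, Integrable (fun s => Gt s b * (h s) ^ 2) μ)
    (hGavg : ∀ b, ∫ s, G s b ∂μ = 0)
    (hGtavg : ∀ b, ∫ s, Gt s b * (h s) ^ 2 ∂μ = 0)
    (hconst : ∀ s₀ s₁, s₀ ≠ s₁ → ∃ c : ℝ, ∀ s, s ≠ s₀ → s ≠ s₁ →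
      (Gt s s₀ - Gt s s₁) - (G s s₀ - G s s₁) = c)
    (u : S → ℝ) (hu : ∀ s, u s = ∫ r, G s r * (h r) ^ 2 ∂μ)
    (huint : Integrable (fun r => (h r) ^ 2 * u r) μ)
    (At : ℝ) (hAt : At = ∫ s, (h s) ^ 2 ∂μ) (hAtpos : 0 < At) :
    ∀ s s₀, s ≠ s₀ →
      Gt s s₀ - G s s₀ =
        -(1 / At) * (u s + u s₀) + (1 / At ^ 2) * ∫ r, (h r) ^ 2 * u r ∂μ :=
  okikiolu_conformal_green_general μ hatom h G Gt hGsym hGtsym hGh2int hGth2int hGtavg hconst u hu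
    huint At hAt hAtpos
end
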